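/- arXiv:1810.12003 — 2 statements merged into one kernel-verified Lean document; each statement's English description precedes it below -/
import Mathlib

section
/- For the indicator function 1_U of a finite nonempty subset U ⊂ V, one has ‖√(Γ(1_U))‖_{ℓ¹_m} ≤ √(2 D_ω) · |∂U|, where D_ω = sup_x sup_{y∼x} m(x)/ω_{xy} < ∞ and |∂U| = Σ_{x∈U, y∉U} ω_{xy}. -/
open Real Filter Topology
open scoped BigOperators

/-- Graph Laplacian: `Δ f x = (1/m x) * Σ_y ω x y * (f y - f x)`. -/
noncomputable def lapOp {V : Type*} (m : V → ℝ) (ω : V → V → ℝ) (f : V → ℝ) (x : V) : ℝ :=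
  (1 / m x) * ∑' y, ω x y * (f y - f x)

/-- Carré du champ: `Γ(f,g)(x) = (1/(2 m x)) * Σ_y ω x y (f y - f x)(g y - g x)`. -/
noncomputable def gamOp {V : Type*} (m : V → ℝ) (ω : V → V → ℝ) (f g : V → ℝ) (x : V) : ℝ :=
  (1 / (2 * m x)) * ∑' y, ω x y * (f y - f x) * (g y - g x)

/-- Iterated carré du champ: `Γ₂(f) = (1/2) Δ Γ(f) - Γ(f, Δ f)`. -/
noncomputable def gam2Op {V : Type*} (m : V → ℝ) (ω : V → V → ℝ) (f : V → ℝ) (x : V) : ℝ :=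
  (1 / 2) * lapOp m ω (fun z => gamOp m ω f f z) x - gamOp m ω f (lapOp m ω f) x

/-- Local finiteness: every vertex has finitely many neighbours. -/
def LocallyFiniteGraph {V : Type*} (ω : V → V → ℝ) : Prop :=
  ∀ x, (Function.support fun y => ω x y).Finite

/-- Assumption (A): either the Laplacian is bounded on ℓ²_m
(equivalently `sup_x deg x / m x < ∞`), or the graph is complete with
non-degenerate measure. -/
def AssumptionA {V : Type*} (m : V → ℝ) (ω : V → V → ℝ) : Prop :=
  (∃ C : ℝ, ∀ x, (∑' y, ω x y) / m x ≤ C) ∨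
  ((∃ η : ℕ → V → ℝ,
      (∀ k, (Function.support (η k)).Finite) ∧
      (∀ k x, η k x ≤ η (k + 1) x) ∧
      (∀ x, Tendsto (fun k => η k x) atTop (𝓝 1)) ∧
      (∀ k : ℕ, 1 ≤ k → ∀ x, gamOp m ω (η k) (η k) x ≤ 1 / (k : ℝ))) ∧
    (∃ δ : ℝ, 0 < δ ∧ ∀ x, δ ≤ m x))

/-- Volume of a set of vertices. -/
noncomputable def volSet {V : Type*} (m : V → ℝ) (U : Set V) : ℝ :=
  ∑' x, Set.indicator U m x

/-- Volume of the edge boundary `|∂U| = Σ_{x∈U, y∉U} ω x y`. -/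
noncomputable def bdrySet {V : Type*} (ω : V → V → ℝ) (U : Set V) : ℝ :=
  ∑' x, Set.indicator U (fun x => ∑' y, Set.indicator Uᶜ (fun y => ω x y) y) x

/-!
Write `f = 1_U` and `E(x) = Σ_y ω_{xy} (f(y) - f(x))² = 2 m(x) Γ(f)(x)`. Every nonzero term of
`E(x)` is the weight of a boundary edge, and `m(x) ≤ D_ω ω_{xy}` for it, so `m(x) ≤ D_ω E(x)`
wherever `E(x) > 0`; hence `m(x) √Γ(f)(x) = √(m(x) E(x) / 2) ≤ √(2 D_ω) E(x) / 2`. Summing over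
`x`, each boundary edge is counted once from each endpoint, so `Σ_x E(x) = 2 |∂U|`.
-/

open Function

theorem mul_sqrt_one_div_two_mul_le {a s D : ℝ} (hs : 0 ≤ s)
    (h : 0 < a → 0 < s → a ≤ D * s) :
    a * √(1 / (2 * a) * s) ≤ √(2 * D) * (s / 2) := by
  rcases le_or_gt a 0 with ha | ha
  · exact (mul_nonpos_of_nonpos_of_nonneg ha (Real.sqrt_nonneg _)).trans (by positivity)
  rcases hs.eq_or_lt with rfl | hs
  · simp
  have has := h ha hs
  have hD : 0 < D := pos_of_mul_pos_left (ha.trans_le has) hs.le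
  rw [← pow_le_pow_iff_left₀ (by positivity) (by positivity) two_ne_zero, mul_pow, mul_pow,
    Real.sq_sqrt (by positivity), Real.sq_sqrt (by positivity)]
  calc a ^ 2 * (1 / (2 * a) * s) = a * s / 2 := by field_simp
    _ ≤ D * s * s / 2 := by gcongr
    _ = 2 * D * (s / 2) ^ 2 := by ring

section WeightedGraph

variable {V : Type*} {ω : V → V → ℝ}

noncomputable def localEnergy (ω : V → V → ℝ) (f : V → ℝ) (x : V) : ℝ :=
  ∑' y, ω x y * (f y - f x) * (f y - f x)

theorem gamOp_self_eq_localEnergy (m f : V → ℝ) (x : V) :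
    gamOp m ω f f x = 1 / (2 * m x) * localEnergy ω f x := rfl

theorem weight_mul_sub_mul_sub_nonneg (hnn : ∀ x y, 0 ≤ ω x y) (f : V → ℝ) (x y : V) :
    0 ≤ ω x y * (f y - f x) * (f y - f x) := by
  rw [mul_assoc]
  exact mul_nonneg (hnn x y) (mul_self_nonneg _)

theorem localEnergy_nonneg (hnn : ∀ x y, 0 ≤ ω x y) (f : V → ℝ) (x : V) :
    0 ≤ localEnergy ω f x :=
  tsum_nonneg (weight_mul_sub_mul_sub_nonneg hnn f x)

theorem summable_localEnergy_term (hloc : LocallyFiniteGraph ω) (f : V → ℝ) (x : V) :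
    Summable fun y => ω x y * (f y - f x) * (f y - f x) :=
  summable_of_hasFiniteSupport <| (hloc x).subset <|
    (support_mul_subset_left _ _).trans (support_mul_subset_left _ _)

variable {U : Set V}

noncomputable def crossWeight (ω : V → V → ℝ) (U : Set V) (x y : V) : ℝ :=
  U.indicator (fun x => Uᶜ.indicator (ω x) y) x

theorem bdrySet_eq_tsum_crossWeight : bdrySet ω U = ∑' x, ∑' y, crossWeight ω U x y := by
  unfold bdrySet
  congr 1 with x
  by_cases hx : x ∈ U <;> simp [crossWeight, hx]

theorem support_crossWeight_finite (hloc : LocallyFiniteGraph ω) (hU : U.Finite) :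
    (support (uncurry (crossWeight ω U))).Finite := by
  refine (hU.prod (hU.biUnion fun x _ => hloc x)).subset ?_
  rintro ⟨x, y⟩ h
  have hx : x ∈ U := by_contra fun hx => h (by simp [crossWeight, hx])
  have hxy : ω x y ≠ 0 := fun hxy => h (by simp [crossWeight, hxy])
  exact ⟨hx, Set.mem_biUnion hx hxy⟩

theorem weight_mul_indicator_sub_sq (hsymm : ∀ x y, ω x y = ω y x) (x y : V) :
    ω x y * (U.indicator (fun _ => (1 : ℝ)) y - U.indicator (fun _ => (1 : ℝ)) x) *
        (U.indicator (fun _ => (1 : ℝ)) y - U.indicator (fun _ => (1 : ℝ)) x) =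
      crossWeight ω U x y + crossWeight ω U y x := by
  by_cases hx : x ∈ U <;> by_cases hy : y ∈ U <;> simp [crossWeight, hx, hy, hsymm x y]

theorem tsum_localEnergy_indicator (hsymm : ∀ x y, ω x y = ω y x)
    (hloc : LocallyFiniteGraph ω) (hU : U.Finite) :
    ∑' x, localEnergy ω (U.indicator fun _ => (1 : ℝ)) x = 2 * bdrySet ω U := by
  have hA : Summable (uncurry (crossWeight ω U)) :=
    summable_of_hasFiniteSupport (support_crossWeight_finite hloc hU)
  have hA' : Summable (uncurry (flip (crossWeight ω U))) := hA.prod_symm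
  calc ∑' x, localEnergy ω (U.indicator fun _ => (1 : ℝ)) x
      = ∑' x, (∑' y, crossWeight ω U x y + ∑' y, crossWeight ω U y x) := by
        congr 1 with x
        simp only [localEnergy, weight_mul_indicator_sub_sq hsymm]
        exact (hA.prod_factor x).tsum_add (hA'.prod_factor x)
    _ = ∑' x, ∑' y, crossWeight ω U x y + ∑' x, ∑' y, crossWeight ω U y x :=
        hA.prod.tsum_add hA'.prod
    _ = 2 * bdrySet ω U := by
        rw [hA.tsum_comm' hA.prod_factor hA'.prod_factor, bdrySet_eq_tsum_crossWeight]
        ring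

theorem support_localEnergy_indicator_finite (hsymm : ∀ x y, ω x y = ω y x)
    (hloc : LocallyFiniteGraph ω) (hU : U.Finite) :
    (support (localEnergy ω (U.indicator fun _ => (1 : ℝ)))).Finite := by
  have hA := support_crossWeight_finite hloc hU
  refine ((hA.image Prod.fst).union (hA.image Prod.snd)).subset fun x hx => ?_
  obtain ⟨y, hy⟩ : ∃ y, crossWeight ω U x y + crossWeight ω U y x ≠ 0 := by
    by_contra! h
    exact hx (by simp [localEnergy, weight_mul_indicator_sub_sq hsymm, h])
  by_cases hxy : crossWeight ω U x y = 0
  · exact Or.inr ⟨(y, x), by simpa [hxy] using hy, rfl⟩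
  · exact Or.inl ⟨(x, y), hxy, rfl⟩

theorem exists_le_localEnergy_indicator (hnn : ∀ x y, 0 ≤ ω x y) (hloc : LocallyFiniteGraph ω)
    {x : V} (h : localEnergy ω (U.indicator fun _ => (1 : ℝ)) x ≠ 0) :
    ∃ y, ω x y ≠ 0 ∧ ω x y ≤ localEnergy ω (U.indicator fun _ => (1 : ℝ)) x := by
  set f := U.indicator fun _ => (1 : ℝ)
  obtain ⟨y, hy⟩ : ∃ y, ω x y * (f y - f x) * (f y - f x) ≠ 0 := by
    by_contra! h'
    exact h (by simp [localEnergy, h'])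
  have hjump : (f y - f x) * (f y - f x) = 1 := by
    by_cases hx : x ∈ U <;> by_cases hy' : y ∈ U <;> simp_all [f]
  refine ⟨y, fun h0 => hy (by simp [h0]), ?_⟩
  calc ω x y = ω x y * (f y - f x) * (f y - f x) := by rw [mul_assoc, hjump, mul_one]
    _ ≤ localEnergy ω f x := (summable_localEnergy_term hloc f x).le_tsum y fun z _ =>
        weight_mul_sub_mul_sub_nonneg hnn f x z

end WeightedGraph

theorem sqrt_gamma_indicator_le_general {V : Type*} (m : V → ℝ) (ω : V → V → ℝ)
    (hnn : ∀ x y, 0 ≤ ω x y) (hsymm : ∀ x y, ω x y = ω y x)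
    (hloc : LocallyFiniteGraph ω)
    (U : Set V) (hUfin : U.Finite)
    (Dω : ℝ) (hDω : ∀ x y, ω x y ≠ 0 → m x ≤ Dω * ω x y) :
    ∑' x, m x * Real.sqrt
        (gamOp m ω (Set.indicator U fun _ => (1:ℝ)) (Set.indicator U fun _ => (1:ℝ)) x)
      ≤ Real.sqrt (2 * Dω) * bdrySet ω U := by
  set f := U.indicator fun _ => (1 : ℝ)
  have hE : (support (localEnergy ω f)).Finite :=
    support_localEnergy_indicator_finite hsymm hloc hUfin
  have hpointwise (x : V) : m x * √(gamOp m ω f f x) ≤ √(2 * Dω) * (localEnergy ω f x / 2) := by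
    refine mul_sqrt_one_div_two_mul_le (localEnergy_nonneg hnn f x) fun hm hpos => ?_
    obtain ⟨y, hy0, hy⟩ := exists_le_localEnergy_indicator hnn hloc hpos.ne'
    have hD : 0 ≤ Dω := (pos_of_mul_pos_left (hm.trans_le (hDω x y hy0)) (hnn x y)).le
    exact (hDω x y hy0).trans (mul_le_mul_of_nonneg_left hy hD)
  have hsummable : Summable fun x => m x * √(gamOp m ω f f x) :=
    summable_of_hasFiniteSupport <| hE.subset <| support_subset_iff'.2 fun x hx => by
      simp [gamOp_self_eq_localEnergy, notMem_support.1 hx]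
  calc ∑' x, m x * √(gamOp m ω f f x)
      ≤ ∑' x, √(2 * Dω) * (localEnergy ω f x / 2) :=
        hsummable.tsum_le_tsum hpointwise
          (((summable_of_hasFiniteSupport hE).div_const 2).mul_left _)
    _ = √(2 * Dω) * bdrySet ω U := by
        rw [tsum_mul_left, tsum_div_const, tsum_localEnergy_indicator hsymm hloc hUfin]
        ring

/-- ℓ¹-bound on √Γ of an indicator by the boundary volume. -/
theorem sqrt_gamma_indicator_le {V : Type*} (m : V → ℝ) (ω : V → V → ℝ)
    (hm : ∀ x, 0 < m x) (hnn : ∀ x y, 0 ≤ ω x y) (hsymm : ∀ x y, ω x y = ω y x)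
    (hloc : LocallyFiniteGraph ω)
    (U : Set V) (hUfin : U.Finite) (hUne : U.Nonempty)
    (Dω : ℝ) (hDω : ∀ x y, ω x y ≠ 0 → m x ≤ Dω * ω x y) :
    ∑' x, m x * Real.sqrt
        (gamOp m ω (Set.indicator U fun _ => (1:ℝ)) (Set.indicator U fun _ => (1:ℝ)) x)
      ≤ Real.sqrt (2 * Dω) * bdrySet ω U :=
  sqrt_gamma_indicator_le_general m ω hnn hsymm hloc U hUfin Dω hDω
end

section
/- Let U ⊂ V be a finite nonempty set and suppose ⟨P_t 1_U, 1_U⟩ ≤ e^{−λt}|U| where |U| = Σ_{x∈U} m(x). If additionally Σ_x m(x)P_t 1_U(x) = |U|, then ‖1_U − P_t 1_U‖_{ℓ¹_m} ≥ 2(1 − e^{−λt})|U|. -/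
/-! For `0 ≤ u ≤ 1` the pointwise identity `|1_U - u| = 1_U + u - 2 u 1_U` turns the ℓ¹_m-distance
into `|U| + Σ m u - 2⟨u, 1_U⟩`. Mass conservation makes the middle term `|U|`, and the decay
hypothesis bounds `⟨u, 1_U⟩` by `e^{-λt}|U|`. -/

open Real Filter Topology
open scoped BigOperators

open Set

lemma abs_indicator_one_sub_of_nonneg_of_le_one {α : Type*} (s : Set α) (x : α) {a : ℝ}
    (h0 : 0 ≤ a) (h1 : a ≤ 1) :
    |s.indicator (fun _ => (1:ℝ)) x - a|
      = s.indicator (fun _ => (1:ℝ)) x + a - 2 * (a * s.indicator (fun _ => (1:ℝ)) x) := by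
  by_cases hx : x ∈ s
  · rw [indicator_of_mem hx, abs_of_nonneg (by linarith)]; ring
  · rw [indicator_of_notMem hx, abs_of_nonpos (by linarith)]; ring

lemma summable_mul_indicator_one {α : Type*} {s : Set α} (hs : s.Finite) (f : α → ℝ) :
    Summable fun x => f x * s.indicator (fun _ => (1:ℝ)) x :=
  summable_of_hasFiniteSupport <|
    hs.subset <| (Function.support_mul_subset_right _ _).trans support_indicator_subset

lemma volSet_eq_tsum_mul_indicator_one {V : Type*} (m : V → ℝ) (U : Set V) :
    volSet m U = ∑' x, m x * U.indicator (fun _ => (1:ℝ)) x :=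
  tsum_congr fun x => by by_cases hx : x ∈ U <;> simp [hx]

lemma volSet_pos {V : Type*} {m : V → ℝ} (hm : ∀ x, 0 < m x) {U : Set V} (hU : U.Finite)
    (hne : U.Nonempty) : 0 < volSet m U := by
  obtain ⟨x, hx⟩ := hne
  rw [volSet_eq_tsum_mul_indicator_one]
  exact (summable_mul_indicator_one hU m).tsum_pos
    (fun y => mul_nonneg (hm y).le (indicator_nonneg (fun _ _ => zero_le_one) y)) x
    (by simpa [hx] using hm x)

lemma tsum_mul_abs_indicator_one_sub {V : Type*} (m : V → ℝ) {U : Set V} (hU : U.Finite)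
    {u : V → ℝ} (h0 : ∀ x, 0 ≤ u x) (h1 : ∀ x, u x ≤ 1) (hu : Summable fun x => m x * u x) :
    ∑' x, m x * |U.indicator (fun _ => (1:ℝ)) x - u x|
      = volSet m U + ∑' x, m x * u x - 2 * ∑' x, m x * u x * U.indicator (fun _ => (1:ℝ)) x := by
  have hpoint : ∀ x, m x * |U.indicator (fun _ => (1:ℝ)) x - u x|
      = m x * U.indicator (fun _ => (1:ℝ)) x + m x * u x
        - 2 * (m x * u x * U.indicator (fun _ => (1:ℝ)) x) := fun x => by
    rw [abs_indicator_one_sub_of_nonneg_of_le_one U x (h0 x) (h1 x)]; ring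
  rw [tsum_congr hpoint, ((summable_mul_indicator_one hU m).add hu).tsum_sub
      ((summable_mul_indicator_one hU _).mul_left 2),
    (summable_mul_indicator_one hU m).tsum_add hu, tsum_mul_left,
    volSet_eq_tsum_mul_indicator_one]

theorem indicator_heat_lower_bound_general {V : Type*} (m : V → ℝ) (hm : ∀ x, 0 < m x)
    (U : Set V) (hUfin : U.Finite) (hUne : U.Nonempty)
    (P : ℝ → (V → ℝ) → V → ℝ) (t lam : ℝ)
    (hpos : ∀ x, 0 ≤ P t (Set.indicator U fun _ => (1:ℝ)) x)
    (hle1 : ∀ x, P t (Set.indicator U fun _ => (1:ℝ)) x ≤ 1)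
    (hDGG : ∑' x, m x * P t (Set.indicator U fun _ => (1:ℝ)) x
              * Set.indicator U (fun _ => (1:ℝ)) x
            ≤ Real.exp (-lam * t) * volSet m U)
    (hmass : ∑' x, m x * P t (Set.indicator U fun _ => (1:ℝ)) x = volSet m U) :
    ∑' x, m x * |Set.indicator U (fun _ => (1:ℝ)) x
        - P t (Set.indicator U fun _ => (1:ℝ)) x|
      ≥ 2 * (1 - Real.exp (-lam * t)) * volSet m U := by
  -- a non-summable `tsum` is `0`, which `hmass` rules out since `|U| > 0`
  have hsum : Summable fun x => m x * P t (Set.indicator U fun _ => (1:ℝ)) x := by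
    by_contra h
    rw [tsum_eq_zero_of_not_summable h] at hmass
    linarith [volSet_pos hm hUfin hUne]
  rw [ge_iff_le, tsum_mul_abs_indicator_one_sub m hUfin hpos hle1 hsum, hmass]
  linarith

/-- lower bound on the ℓ¹-distance between an indicator and its evolution. -/
theorem indicator_heat_lower_bound {V : Type*} (m : V → ℝ) (hm : ∀ x, 0 < m x)
    (U : Set V) (hUfin : U.Finite) (hUne : U.Nonempty)
    (P : ℝ → (V → ℝ) → V → ℝ) (t lam : ℝ) (ht : 0 ≤ t) (hlam : 0 ≤ lam)
    (hpos : ∀ x, 0 ≤ P t (Set.indicator U fun _ => (1:ℝ)) x)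
    (hle1 : ∀ x, P t (Set.indicator U fun _ => (1:ℝ)) x ≤ 1)
    (hDGG : ∑' x, m x * P t (Set.indicator U fun _ => (1:ℝ)) x
              * Set.indicator U (fun _ => (1:ℝ)) x
            ≤ Real.exp (-lam * t) * volSet m U)
    (hmass : ∑' x, m x * P t (Set.indicator U fun _ => (1:ℝ)) x = volSet m U) :
    ∑' x, m x * |Set.indicator U (fun _ => (1:ℝ)) x
        - P t (Set.indicator U fun _ => (1:ℝ)) x|
      ≥ 2 * (1 - Real.exp (-lam * t)) * volSet m U :=
  indicator_heat_lower_bound_general m hm U hUfin hUne P t lam hpos hle1 hDGG hmass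
end
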